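/- arXiv:2410.09548 — 3 statements merged into one kernel-verified Lean document; each statement's English description precedes it below -/
import Mathlib

section
/- Let θ₁, θ₂, θ₃ be independent random variables, each uniformly distributed on [0, 2π), and let v₁, v₂, v₃ be strictly positive real-valued random variables (with arbitrary joint distribution) that are independent of (θ₁, θ₂, θ₃). Let S = Σ_{i=1}^{3} vᵢ·(cos θᵢ, sin θᵢ) ∈ ℝ², identified with the complex number Σ_{i=1}^{3} vᵢ e^{iθᵢ}. Then S ≠ 0 almost surely, and the argument of S is uniformly distributed: the pushforward of the underlying probability measure under ω ↦ arg(S(ω)) is the uniform probability measure on the interval (−π, π]. -/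
/-!
Condition on the speeds. For fixed speeds `x` with `x 0 ≠ 0` the three angles, read in the
circle group `ℝ / 2πℤ`, have the product Haar law. Rotating all of them by the same `t` preserves
that law and multiplies the resultant by `e^{it}`, so the law of its argument (as an angle) is
rotation invariant, hence the normalized Haar measure, which `toReal` carries to the uniform law
on `(-π, π]`. The resultant vanishes only on a null set: once the other angles are fixed, at most
one value of `θ₀` makes it vanish.
-/

open MeasureTheory ProbabilityTheory Real Set

noncomputable section

namespace MeasureTheory.Measure

section CompactAddGroup

variable {G : Type*} [AddGroup G] [TopologicalSpace G] [IsTopologicalAddGroup G]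
  [CompactSpace G] [MeasurableSpace G] [BorelSpace G]

theorem isAddLeftInvariant_eq_of_isProbabilityMeasure (ν μ : Measure G)
    [IsProbabilityMeasure ν] [IsProbabilityMeasure μ] [μ.IsAddHaarMeasure]
    [ν.IsAddLeftInvariant] : ν = μ := by
  have h := isAddInvariant_eq_smul_of_compactSpace ν μ
  have h1 : addHaarScalarFactor ν μ = 1 := by
    simpa [eq_comm] using congrArg (fun m : Measure G => m univ) h
  rwa [h1, one_smul] at h

theorem map_eq_of_ae_equivariant {X : Type*} [MeasurableSpace X] {P : Measure X}
    [IsProbabilityMeasure P] (μ : Measure G) [IsProbabilityMeasure μ] [μ.IsAddHaarMeasure]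
    {f : X → G} (hf : Measurable f) (σ : G → X → X) (hσ : ∀ g, MeasurePreserving (σ g) P P)
    (hfσ : ∀ g, f ∘ σ g =ᵐ[P] (g + ·) ∘ f) : P.map f = μ := by
  have : IsProbabilityMeasure (P.map f) := isProbabilityMeasure_map hf.aemeasurable
  have : (P.map f).IsAddLeftInvariant := ⟨fun g => by
    rw [map_map (measurable_const_add g) hf, ← map_congr (hfσ g), ← map_map hf (hσ g).measurable,
      (hσ g).map_eq]⟩
  exact isAddLeftInvariant_eq_of_isProbabilityMeasure _ μ

end CompactAddGroup

theorem pi_eq_zero_of_subsingleton_update {ι : Type*} [Fintype ι] [DecidableEq ι]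
    {X : ι → Type*} [∀ i, MeasurableSpace (X i)] (μ : ∀ i, Measure (X i))
    [∀ i, SigmaFinite (μ i)] (j : ι) [NullSingletonClass (μ j)] {s : Set (∀ i, X i)}
    (hs : MeasurableSet s) (h : ∀ x, {a | Function.update x j a ∈ s}.Subsingleton) :
    Measure.pi μ s = 0 := by
  obtain rfl | ⟨x, -⟩ := s.eq_empty_or_nonempty
  · exact measure_empty
  have hslice : (fun y => ∫⁻ a, s.indicator 1 (Function.update y j a) ∂μ j) = 0 := by
    funext y
    refine (lintegral_congr_ae ?_).trans lintegral_zero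
    filter_upwards [measure_eq_zero_iff_ae_notMem.1 ((h y).measure_zero (μ j))] with a ha
    exact indicator_of_notMem ha 1
  calc Measure.pi μ s = ∫⁻ y, s.indicator 1 y ∂Measure.pi μ := (lintegral_indicator_one hs).symm
    _ = (∫⋯∫⁻_Finset.univ, s.indicator 1 ∂μ) x := lintegral_eq_lmarginal_univ x
    _ = 0 := by
      rw [lmarginal_erase' _ (measurable_one.indicator hs) (Finset.mem_univ j), hslice]
      simp [lmarginal]

theorem map_prod_eq_of_ae_map_eq {α β γ : Type*} [MeasurableSpace α] [MeasurableSpace β]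
    [MeasurableSpace γ] {κ : Measure α} [IsProbabilityMeasure κ] {ν : Measure β} [SFinite ν]
    {ρ : Measure γ} {f : α × β → γ} (hf : Measurable f)
    (h : ∀ᵐ x ∂κ, ν.map (fun y => f (x, y)) = ρ) : (κ.prod ν).map f = ρ := by
  ext s hs
  rw [map_apply hf hs, prod_apply (hf hs)]
  calc ∫⁻ x, ν (Prod.mk x ⁻¹' (f ⁻¹' s)) ∂κ = ∫⁻ _, ρ s ∂κ :=
        lintegral_congr_ae <| h.mono fun x hx => by
          rw [← hx, map_apply (f := fun y => f (x, y)) (hf.comp measurable_prodMk_left) hs]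
          rfl
    _ = ρ s := by simp

end MeasureTheory.Measure

namespace Real.Angle

instance : Fact (0 < 2 * π) := ⟨two_pi_pos⟩

instance : MeasurableSpace Angle := inferInstanceAs (MeasurableSpace (AddCircle (2 * π)))

instance : BorelSpace Angle := inferInstanceAs (BorelSpace (AddCircle (2 * π)))

instance : CompactSpace Angle := inferInstanceAs (CompactSpace (AddCircle (2 * π)))

def haar : Measure Angle := AddCircle.haarAddCircle

instance : IsProbabilityMeasure haar :=
  inferInstanceAs (IsProbabilityMeasure (AddCircle.haarAddCircle (T := 2 * π)))

instance : haar.IsAddHaarMeasure :=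
  inferInstanceAs (AddCircle.haarAddCircle (T := 2 * π)).IsAddHaarMeasure

instance : NullSingletonClass haar := ⟨fun θ => by
  have h := AddCircle.volume_closedBall (2 * π) (x := (show AddCircle (2 * π) from θ)) 0
  rw [Metric.closedBall_zero, mul_zero, min_eq_right two_pi_pos.le, ENNReal.ofReal_zero,
    AddCircle.volume_eq_smul_haarAddCircle, Measure.smul_apply, smul_eq_mul, mul_eq_zero] at h
  exact h.resolve_left (ENNReal.ofReal_pos.2 two_pi_pos).ne'⟩

@[fun_prop]
theorem measurable_coe : Measurable ((↑) : ℝ → Angle) := continuous_coe.measurable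

theorem measurable_toReal : Measurable toReal :=
  measurable_subtype_coe.comp (AddCircle.measurableEquivIoc (2 * π) (-π)).measurable

@[fun_prop]
theorem continuous_toCircle : Continuous toCircle := AddCircle.homeomorphCircle'.continuous

theorem injective_toCircle : Function.Injective toCircle :=
  Function.LeftInverse.injective (g := fun z : Circle => (Complex.arg z : Angle)) arg_toCircle

theorem haar_eq_smul_map_coe (a : ℝ) :
    haar = (ENNReal.ofReal (2 * π))⁻¹ •
      (volume.restrict (Ioc a (a + 2 * π))).map ((↑) : ℝ → Angle) := by
  have h : (volume.restrict (Ioc a (a + 2 * π))).map ((↑) : ℝ → Angle) =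
      ENNReal.ofReal (2 * π) • haar :=
    (AddCircle.measurePreserving_mk (2 * π) a).map_eq.trans AddCircle.volume_eq_smul_haarAddCircle
  rw [h, smul_smul, ENNReal.inv_mul_cancel (by simp [pi_pos]) ENNReal.ofReal_ne_top, one_smul]

theorem map_coe_smul_restrict_Ico :
    ((ENNReal.ofReal (2 * π))⁻¹ • volume.restrict (Ico 0 (2 * π))).map ((↑) : ℝ → Angle) =
      haar := by
  rw [Measure.restrict_congr_set Ico_ae_eq_Ioc, Measure.map_smul, haar_eq_smul_map_coe 0, zero_add]

theorem map_toReal_haar :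
    haar.map toReal = (ENNReal.ofReal (2 * π))⁻¹ • volume.restrict (Ioc (-π) π) := by
  have hinv : toReal ∘ ((↑) : ℝ → Angle) =ᵐ[volume.restrict (Ioc (-π) π)] id :=
    ae_restrict_of_forall_mem measurableSet_Ioc fun x hx => toReal_coe_eq_self_iff_mem_Ioc.2 hx
  rw [haar_eq_smul_map_coe (-π), neg_add_eq_sub, two_mul, add_sub_cancel_right, Measure.map_smul,
    Measure.map_map measurable_toReal measurable_coe, Measure.map_congr hinv, Measure.map_id]

end Real.Angle

open Real.Angle

section Resultant

variable {ι : Type*} [Fintype ι]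

def resultant (x : ι → ℝ) (φ : ι → Angle) : ℂ := ∑ i, (x i : ℂ) * (φ i).toCircle

theorem measurable_resultant :
    Measurable fun p : (ι → ℝ) × (ι → Angle) => resultant p.1 p.2 := by
  unfold resultant
  fun_prop

@[fun_prop]
theorem measurable_resultant_right (x : ι → ℝ) : Measurable (resultant x) :=
  measurable_resultant.comp measurable_prodMk_left

theorem resultant_const_add (x : ι → ℝ) (t : Angle) (φ : ι → Angle) :
    resultant x (Function.const ι t + φ) = t.toCircle * resultant x φ := by
  simp only [resultant, Pi.add_apply, Function.const_apply, toCircle_add, Circle.coe_mul,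
    Finset.mul_sum]
  exact Finset.sum_congr rfl fun i _ => by ring

theorem resultant_update_sub_resultant_update [DecidableEq ι] (x : ι → ℝ) (φ : ι → Angle)
    (j : ι) (a b : Angle) :
    resultant x (Function.update φ j a) - resultant x (Function.update φ j b) =
      x j * (a.toCircle - b.toCircle) := by
  rw [resultant, resultant, ← Finset.sum_sub_distrib, Finset.sum_eq_single j]
  · simp [mul_sub]
  · intro i _ hi
    simp [Function.update_of_ne hi]
  · simp

theorem measure_resultant_eq_zero (x : ι → ℝ) {j : ι} (hj : x j ≠ 0) :
    Measure.pi (fun _ => haar) {φ : ι → Angle | resultant x φ = 0} = 0 := by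
  classical
  refine Measure.pi_eq_zero_of_subsingleton_update _ j
    (measurable_resultant_right x (measurableSet_singleton 0))
    fun φ a ha b hb => injective_toCircle (Subtype.ext ?_)
  have h := resultant_update_sub_resultant_update x φ j a b
  rw [ha.out, hb.out, sub_zero, eq_comm, mul_eq_zero, sub_eq_zero] at h
  exact h.resolve_left (by exact_mod_cast hj)

theorem ae_resultant_ne_zero (x : ι → ℝ) {j : ι} (hj : x j ≠ 0) :
    ∀ᵐ φ ∂Measure.pi (fun _ => haar), resultant x φ ≠ 0 :=
  measure_eq_zero_iff_ae_notMem.1 (measure_resultant_eq_zero x hj)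

theorem map_coe_arg_resultant (x : ι → ℝ) {j : ι} (hj : x j ≠ 0) :
    (Measure.pi fun _ => haar).map (fun φ => (Complex.arg (resultant x φ) : Angle)) = haar := by
  refine Measure.map_eq_of_ae_equivariant haar (by fun_prop) (fun t φ => Function.const ι t + φ)
    (fun t => measurePreserving_add_left _ _) fun t => ?_
  filter_upwards [ae_resultant_ne_zero x hj] with φ hφ
  simp only [Function.comp_apply, resultant_const_add,
    Complex.arg_mul_coe_angle (Circle.coe_ne_zero _) hφ, arg_toCircle]

theorem map_arg_resultant (x : ι → ℝ) {j : ι} (hj : x j ≠ 0) :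
    (Measure.pi fun _ => haar).map (fun φ => Complex.arg (resultant x φ)) =
      (ENNReal.ofReal (2 * π))⁻¹ • volume.restrict (Ioc (-π) π) := by
  have h : (fun φ => Complex.arg (resultant x φ)) =
      toReal ∘ fun φ => (Complex.arg (resultant x φ) : Angle) :=
    funext fun φ => (Complex.arg_coe_angle_toReal_eq_arg _).symm
  rw [h, ← Measure.map_map measurable_toReal (by fun_prop), map_coe_arg_resultant x hj,
    map_toReal_haar]

end Resultant

theorem map_prod_coe_eq_prod_pi_haar {Ω ι β : Type*} [Fintype ι] [MeasurableSpace Ω]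
    [MeasurableSpace β] {μ : Measure Ω} [IsProbabilityMeasure μ] {V : Ω → β}
    {θ : ι → Ω → ℝ} (hV : Measurable V) (hθmeas : ∀ i, Measurable (θ i))
    (hθindep : iIndepFun θ μ)
    (hθunif : ∀ i, μ.map (θ i) = (ENNReal.ofReal (2 * π))⁻¹ • volume.restrict (Ico 0 (2 * π)))
    (hindep : IndepFun V (fun ω i => θ i ω) μ) :
    μ.map (fun ω => (V ω, fun i => (θ i ω : Angle))) =
      (μ.map V).prod (Measure.pi fun _ => haar) := by
  have hcoe : Measurable fun (y : ι → ℝ) i => (y i : Angle) := by fun_prop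
  have hΦlaw : μ.map (fun ω i => (θ i ω : Angle)) = Measure.pi fun _ => haar :=
    ((iIndepFun_iff_map_fun_eq_pi_map fun i => (measurable_coe.comp (hθmeas i)).aemeasurable).1
      (hθindep.comp _ fun _ => measurable_coe)).trans <| by
        congr with i : 1
        rw [← Measure.map_map measurable_coe (hθmeas i), hθunif i, map_coe_smul_restrict_Ico]
  rw [← hΦlaw]
  exact (indepFun_iff_map_prod_eq_prod_map_map hV.aemeasurable
    (hcoe.comp (measurable_pi_lambda _ hθmeas)).aemeasurable).1 (hindep.comp measurable_id hcoe)

/-- The argument of the resultant of three independent uniformly directed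
velocity vectors is uniformly distributed on `(-π, π]`, and the resultant is a.s. nonzero. -/
theorem arg_of_resultant_uniform
    {Ω : Type*} [MeasurableSpace Ω] (μ : Measure Ω) [IsProbabilityMeasure μ]
    (v θ : Fin 3 → Ω → ℝ)
    (hvmeas : ∀ i, Measurable (v i)) (hθmeas : ∀ i, Measurable (θ i))
    (hvpos : ∀ i, ∀ᵐ ω ∂μ, 0 < v i ω)
    (hθindep : iIndepFun θ μ)
    (hθunif : ∀ i, Measure.map (θ i) μ
      = (ENNReal.ofReal (2 * π))⁻¹ • volume.restrict (Set.Ico 0 (2 * π)))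
    (hindep : IndepFun (fun ω i => v i ω) (fun ω i => θ i ω) μ)
    (S : Ω → ℂ)
    (hS : ∀ ω, S ω = ∑ i, (v i ω : ℂ) * Complex.exp (Complex.I * (θ i ω : ℂ))) :
    (∀ᵐ ω ∂μ, S ω ≠ 0) ∧
      Measure.map (fun ω => Complex.arg (S ω)) μ
        = (ENNReal.ofReal (2 * π))⁻¹ • volume.restrict (Set.Ioc (-π) π) := by
  set V : Ω → Fin 3 → ℝ := fun ω i => v i ω
  set Z : Ω → (Fin 3 → ℝ) × (Fin 3 → Angle) := fun ω => (V ω, fun i => (θ i ω : Angle))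
  have hV : Measurable V := measurable_pi_lambda _ hvmeas
  have hZ : Measurable Z := by fun_prop
  have : IsProbabilityMeasure (μ.map V) := Measure.isProbabilityMeasure_map hV.aemeasurable
  have hlaw := map_prod_coe_eq_prod_pi_haar hV hθmeas hθindep hθunif hindep
  have hSZ : ∀ ω, S ω = resultant (Z ω).1 (Z ω).2 := fun ω => by
    simp [hS, resultant, Z, V, Circle.coe_exp, mul_comm]
  have hV0 : ∀ᵐ x ∂μ.map V, x 0 ≠ 0 :=
    (ae_map_iff hV.aemeasurable (measurable_pi_apply 0 (measurableSet_singleton 0)).compl).2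
      ((hvpos 0).mono fun _ h => h.ne')
  have harg : Measurable fun p : (Fin 3 → ℝ) × (Fin 3 → Angle) =>
      Complex.arg (resultant p.1 p.2) := Complex.measurable_arg.comp measurable_resultant
  constructor
  · have h : ∀ᵐ p ∂μ.map Z, resultant p.1 p.2 ≠ 0 := by
      rw [hlaw]
      refine (Measure.ae_prod_iff_ae_ae
        (measurable_resultant (measurableSet_singleton 0)).compl).2 ?_
      filter_upwards [hV0] with x hx using ae_resultant_ne_zero x hx
    filter_upwards [ae_of_ae_map hZ.aemeasurable h] with ω hω
    rwa [hSZ]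
  · have hargS : (fun ω => Complex.arg (S ω)) =
        (fun p : (Fin 3 → ℝ) × (Fin 3 → Angle) => Complex.arg (resultant p.1 p.2)) ∘ Z :=
      funext fun ω => congrArg Complex.arg (hSZ ω)
    rw [hargS, ← Measure.map_map harg hZ, hlaw]
    exact Measure.map_prod_eq_of_ae_map_eq harg (hV0.mono fun x hx => map_arg_resultant x hx)
end
end

section
/- Let x₁, x₂ be points in the Euclidean plane ℝ² at distance s = ‖x₁ − x₂‖ > 0, let r > 0 and θ ∈ [0, π], and set R = √(r² + s² + 2rs·cos θ). Assume that either θ ≤ π/2, or s·cos(π − θ) ≤ r (so that the angle arcsin(s·sin θ/R) subtended at the far intersection configuration does not exceed π/2). Then the area (two-dimensional Lebesgue measure) of the intersection of the closed disk of radius r centered at x₁ with the closed disk of radius R centered at x₂ equals R²·(θ − arcsin(s·sin θ / R)) + r²·(π − θ) − r·s·sin θ. -/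
/-!
Move `x₁` to the origin and `x₂` to `(s, 0)` by an isometry. The common chord of the two circles
lies on the line `x = -r cos θ`, and its endpoints `P` form with the centres a triangle with sides
`r`, `s`, `R` and angle `π - θ` at `x₁`. The chord cuts the lens into a segment of the first disk
with half-angle `π - θ` and a segment of the second disk with half-angle `θ - φ`, the angle of the
triangle at `x₂`, where `φ = arcsin (s sin θ / R)` is its angle at `P` by the law of sines; the
hypothesis on `θ` says that this angle is not obtuse, so that `arcsin` returns it. By Fubini and
the substitution `x = ρ cos t`, a segment of half-angle `α` of a disk of radius `ρ` has area
`ρ² (α - sin α cos α)`.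
-/

open MeasureTheory Real Set Metric

theorem Real.volume_setOf_sq_le (m : ℝ) :
    volume {y : ℝ | y ^ 2 ≤ m} = ENNReal.ofReal (2 * √m) := by
  rcases le_or_gt 0 m with hm | hm
  · have : {y : ℝ | y ^ 2 ≤ m} = Icc (-√m) √m := by
      ext y
      exact Real.sq_le hm
    rw [this, volume_Icc]
    ring_nf
  · have : {y : ℝ | y ^ 2 ≤ m} = ∅ :=
      eq_empty_of_forall_notMem fun y hy => (hm.trans_le (sq_nonneg y)).not_ge hy
    rw [this, sqrt_eq_zero_of_nonpos hm.le]
    simp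

theorem volume_setOf_snd_sq_le {g : ℝ → ℝ} (hg : Measurable g) :
    volume {p : ℝ × ℝ | p.2 ^ 2 ≤ g p.1} = ∫⁻ x, ENNReal.ofReal (2 * √(g x)) := by
  rw [Measure.volume_eq_prod, Measure.prod_apply (measurableSet_le (by fun_prop) (by fun_prop))]
  simp_rw [preimage_ofPred_eq, Real.volume_setOf_sq_le]

theorem integral_two_mul_sqrt_sq_sub_sq {ρ α : ℝ} (hρ : 0 ≤ ρ) (hα : α ∈ Icc 0 π) :
    ∫ x in ρ * cos α..ρ, 2 * √(ρ ^ 2 - x ^ 2) = ρ ^ 2 * (α - sin α * cos α) := by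
  have hsubst := intervalIntegral.integral_comp_mul_deriv (a := α) (b := 0)
    (f := fun t => ρ * cos t) (f' := fun t => -(ρ * sin t)) (g := fun x => 2 * √(ρ ^ 2 - x ^ 2))
    (fun t _ => (hasDerivAt_cos t).const_mul ρ |>.congr_deriv (by ring))
    (by fun_prop) (by fun_prop)
  rw [cos_zero, mul_one] at hsubst
  rw [← hsubst, intervalIntegral.integral_congr (g := fun t => -(2 * ρ ^ 2) * sin t ^ 2),
    intervalIntegral.integral_const_mul, integral_sin_sq]
  · simp only [sin_zero, cos_zero]
    ring
  · intro t ht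
    rw [uIcc_of_ge hα.1] at ht
    have hsin : 0 ≤ sin t := sin_nonneg_of_nonneg_of_le_pi ht.1 (ht.2.trans hα.2)
    have : ρ ^ 2 - (ρ * cos t) ^ 2 = (ρ * sin t) ^ 2 := by
      linear_combination ρ ^ 2 * (sin_sq_add_cos_sq t).symm
    simp only [Function.comp, this, sqrt_sq (mul_nonneg hρ hsin)]
    ring

theorem volume_lens_eq_integral {r R : ℝ} (hr : 0 ≤ r) (hR : 0 ≤ R) (s : ℝ) :
    volume {p : ℝ × ℝ | p.1 ^ 2 + p.2 ^ 2 ≤ r ^ 2 ∧ (p.1 - s) ^ 2 + p.2 ^ 2 ≤ R ^ 2}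
      = ENNReal.ofReal (∫ x in (s - R)..r, 2 * √(min (r ^ 2 - x ^ 2) (R ^ 2 - (x - s) ^ 2))) := by
  set f : ℝ → ℝ := fun x => 2 * √(min (r ^ 2 - x ^ 2) (R ^ 2 - (x - s) ^ 2))
  have hlens : {p : ℝ × ℝ | p.1 ^ 2 + p.2 ^ 2 ≤ r ^ 2 ∧ (p.1 - s) ^ 2 + p.2 ^ 2 ≤ R ^ 2}
      = {p : ℝ × ℝ | p.2 ^ 2 ≤ min (r ^ 2 - p.1 ^ 2) (R ^ 2 - (p.1 - s) ^ 2)} := by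
    ext p
    simp only [mem_ofPred_eq, le_min_iff, le_sub_iff_add_le']
  have hsupp : Function.support f ⊆ Ioc (s - R) r := by
    intro x hx
    by_contra hx'
    refine hx ?_
    simp only [f, mul_eq_zero, OfNat.ofNat_ne_zero, false_or]
    refine sqrt_eq_zero_of_nonpos ?_
    rcases not_and_or.mp hx' with h | h
    · exact (min_le_right _ _).trans (by nlinarith)
    · exact (min_le_left _ _).trans (by nlinarith)
  have hf_int : Integrable f := (by fun_prop : Continuous f).integrable_of_hasCompactSupport <|
    HasCompactSupport.intro (isCompact_Icc (a := s - R) (b := r)) fun x hx =>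
      Function.notMem_support.mp fun h => hx (Ioc_subset_Icc_self (hsupp h))
  rw [hlens, intervalIntegral.integral_eq_integral_of_support_subset hsupp,
    ofReal_integral_eq_lintegral_ofReal hf_int (Filter.Eventually.of_forall fun x => by positivity)]
  exact volume_setOf_snd_sq_le (g := fun x => min (r ^ 2 - x ^ 2) (R ^ 2 - (x - s) ^ 2))
    (by fun_prop)

/-- `β` and `α` are the half-angles subtended by the common chord at the two centres. -/
theorem volume_lens {r R s α β : ℝ} (hr : 0 ≤ r) (hR : 0 ≤ R) (hs : 0 ≤ s)
    (hα : α ∈ Icc 0 π) (hβ : β ∈ Icc 0 π) (hchord : r * sin β = R * sin α)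
    (hcenters : r * cos β + R * cos α = s) :
    volume {p : ℝ × ℝ | p.1 ^ 2 + p.2 ^ 2 ≤ r ^ 2 ∧ (p.1 - s) ^ 2 + p.2 ^ 2 ≤ R ^ 2}
      = ENNReal.ofReal (r ^ 2 * (β - sin β * cos β) + R ^ 2 * (α - sin α * cos α)) := by
  set f : ℝ → ℝ := fun x => 2 * √(min (r ^ 2 - x ^ 2) (R ^ 2 - (x - s) ^ 2))
  -- the chord lies on `x = r cos β`: to its left the second disk is the narrower one
  have hmin : ∀ x, R ^ 2 - (x - s) ^ 2 - (r ^ 2 - x ^ 2) = 2 * s * (x - r * cos β) := fun x => by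
    linear_combination (s - r * cos β + R * cos α) * hcenters
      - (R * sin α + r * sin β) * hchord - R ^ 2 * sin_sq_add_cos_sq α + r ^ 2 * sin_sq_add_cos_sq β
  have hf : Continuous f := by fun_prop
  have hd : s - R ≤ r * cos β := by nlinarith [cos_le_one α]
  have hleft : ∫ x in (s - R)..(r * cos β), f x = R ^ 2 * (α - sin α * cos α) := by
    rw [intervalIntegral.integral_congr (g := fun x => 2 * √(R ^ 2 - (s - x) ^ 2)) fun x hx => by
        rw [uIcc_of_le hd] at hx
        have hx' := mul_nonneg hs (sub_nonneg.mpr hx.2)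
        dsimp only [f]
        rw [min_eq_right (by nlinarith [hmin x]), ← neg_sub s x, neg_sq],
      intervalIntegral.integral_comp_sub_left (fun x => 2 * √(R ^ 2 - x ^ 2)), sub_sub_cancel,
      ← hcenters, add_sub_cancel_left, integral_two_mul_sqrt_sq_sub_sq hR hα]
  have hright : ∫ x in (r * cos β)..r, f x = r ^ 2 * (β - sin β * cos β) := by
    rw [intervalIntegral.integral_congr (g := fun x => 2 * √(r ^ 2 - x ^ 2)) fun x hx => by
        rw [uIcc_of_le (by nlinarith [cos_le_one β])] at hx
        have hx' := mul_nonneg hs (sub_nonneg.mpr hx.1)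
        dsimp only [f]
        rw [min_eq_left (by nlinarith [hmin x])],
      integral_two_mul_sqrt_sq_sub_sq hr hβ]
  rw [volume_lens_eq_integral hr hR, ← intervalIntegral.integral_add_adjacent_intervals
    (b := r * cos β) (hf.intervalIntegrable _ _) (hf.intervalIntegrable _ _), hleft, hright,
    add_comm]

theorem volume_closedBall_inter_closedBall_congr {E : Type*} [NormedAddCommGroup E]
    [InnerProductSpace ℝ E] [FiniteDimensional ℝ E] [MeasurableSpace E] [BorelSpace E]
    {x₁ x₂ y₁ y₂ : E} (h : dist x₁ x₂ = dist y₁ y₂) (r R : ℝ) :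
    volume (closedBall x₁ r ∩ closedBall x₂ R) = volume (closedBall y₁ r ∩ closedBall y₂ R) := by
  set L := Submodule.reflection (ℝ ∙ ((x₂ - x₁) - (y₂ - y₁)))ᗮ
  have hL : L (x₂ - x₁) = y₂ - y₁ :=
    Submodule.reflection_sub (by rw [← dist_eq_norm, ← dist_eq_norm, dist_comm, h, dist_comm])
  have hf : MeasurePreserving (fun p => y₁ + L (p - x₁)) :=
    (measurePreserving_add_left volume y₁).comp
      (L.measurePreserving.comp (measurePreserving_sub_right volume x₁))
  have hpre : (fun p => y₁ + L (p - x₁)) ⁻¹' (closedBall y₁ r ∩ closedBall y₂ R)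
      = closedBall x₁ r ∩ closedBall x₂ R := by
    ext p
    simp only [mem_preimage, mem_inter_iff, mem_closedBall, dist_eq_norm, add_sub_cancel_left,
      LinearIsometryEquiv.norm_map]
    rw [show y₂ = y₁ + L (x₂ - x₁) by rw [hL]; abel, add_sub_add_left_eq_sub, ← map_sub,
      LinearIsometryEquiv.norm_map, sub_sub_sub_cancel_right]
  rw [← hpre, hf.measure_preimage
    (measurableSet_closedBall.inter measurableSet_closedBall).nullMeasurableSet]

theorem EuclideanSpace.volume_closedBall_inter_closedBall_fin_two {r R : ℝ} (hr : 0 ≤ r)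
    (hR : 0 ≤ R) (s : ℝ) :
    volume (closedBall (0 : EuclideanSpace ℝ (Fin 2)) r ∩ closedBall !₂[s, 0] R)
      = volume {p : ℝ × ℝ | p.1 ^ 2 + p.2 ^ 2 ≤ r ^ 2 ∧ (p.1 - s) ^ 2 + p.2 ^ 2 ≤ R ^ 2} := by
  have he := (volume_preserving_finTwoArrow ℝ).comp (PiLp.volume_preserving_ofLp (Fin 2))
  have hmeas : MeasurableSet
      {p : ℝ × ℝ | p.1 ^ 2 + p.2 ^ 2 ≤ r ^ 2 ∧ (p.1 - s) ^ 2 + p.2 ^ 2 ≤ R ^ 2} := by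
    measurability
  rw [← he.measure_preimage hmeas.nullMeasurableSet]
  congr 1
  ext p
  simp [EuclideanSpace.dist_eq, EuclideanSpace.norm_eq, Fin.sum_univ_two, sqrt_le_left hr,
    sqrt_le_left hR, Real.dist_eq]

theorem sqrt_sq_add_sq_mul_sin_arcsin (a b : ℝ) :
    √(a ^ 2 + b ^ 2) * sin (arcsin (b / √(a ^ 2 + b ^ 2))) = b := by
  rcases (sqrt_nonneg (a ^ 2 + b ^ 2)).eq_or_lt with h | h
  · rw [← h, zero_mul]
    nlinarith [sqrt_eq_zero'.mp h.symm, sq_nonneg a, sq_nonneg b]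
  · have hb : |b / √(a ^ 2 + b ^ 2)| ≤ 1 := by
      rw [abs_div, abs_of_pos h, div_le_one h]
      exact abs_le_sqrt (le_add_of_nonneg_left (sq_nonneg a))
    rw [sin_arcsin (abs_le.mp hb).1 (abs_le.mp hb).2, mul_div_cancel₀ _ h.ne']

theorem sqrt_sq_add_sq_mul_cos_arcsin {a : ℝ} (ha : 0 ≤ a) (b : ℝ) :
    √(a ^ 2 + b ^ 2) * cos (arcsin (b / √(a ^ 2 + b ^ 2))) = a := by
  have hsin := sqrt_sq_add_sq_mul_sin_arcsin a b
  set R := √(a ^ 2 + b ^ 2)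
  set φ := arcsin (b / R)
  refine (sq_eq_sq₀ (mul_nonneg (sqrt_nonneg _) (cos_arcsin_nonneg _)) ha).mp ?_
  linear_combination R ^ 2 * cos_sq_add_sin_sq φ - (R * sin φ + b) * hsin
    + sq_sqrt (add_nonneg (sq_nonneg a) (sq_nonneg b))

/-- In a triangle with sides `r`, `s`, `R` and angle `π - θ` between `r` and `s`, this is the angle
between `s` and `R`. -/
theorem triangle_angle_sub_arcsin {r s θ R : ℝ} (hr : 0 ≤ r) (hs : 0 ≤ s) (hθ : θ ∈ Icc 0 π)
    (hc : 0 ≤ r + s * cos θ) (hR : R = √(r ^ 2 + s ^ 2 + 2 * r * s * cos θ)) :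
    θ - arcsin (s * sin θ / R) ∈ Icc 0 π ∧
      R * cos (θ - arcsin (s * sin θ / R)) = s + r * cos θ ∧
      R * sin (θ - arcsin (s * sin θ / R)) = r * sin θ := by
  have hsinθ := sin_nonneg_of_nonneg_of_le_pi hθ.1 hθ.2
  rw [show r ^ 2 + s ^ 2 + 2 * r * s * cos θ = (r + s * cos θ) ^ 2 + (s * sin θ) ^ 2 by
    linear_combination s ^ 2 * (sin_sq_add_cos_sq θ).symm] at hR
  have hRcos : R * cos (arcsin (s * sin θ / R)) = r + s * cos θ :=
    hR ▸ sqrt_sq_add_sq_mul_cos_arcsin hc _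
  have hRsin : R * sin (arcsin (s * sin θ / R)) = s * sin θ :=
    hR ▸ sqrt_sq_add_sq_mul_sin_arcsin _ _
  set φ := arcsin (s * sin θ / R)
  have hcos : R * cos (θ - φ) = s + r * cos θ := by
    linear_combination cos θ * hRcos + sin θ * hRsin + s * sin_sq_add_cos_sq θ
      + R * cos_sub θ φ
  have hsin : R * sin (θ - φ) = r * sin θ := by
    linear_combination sin θ * hRcos - cos θ * hRsin + R * sin_sub θ φ
  have hφ0 : 0 ≤ φ := arcsin_nonneg.mpr (div_nonneg (mul_nonneg hs hsinθ) (hR ▸ sqrt_nonneg _))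
  refine ⟨⟨?_, by linarith [hθ.2]⟩, hcos, hsin⟩
  by_contra! hneg
  have hR_pos : 0 < R := by
    by_contra! hR0
    have : φ = 0 := by simp [φ, le_antisymm hR0 (hR ▸ sqrt_nonneg _)]
    linarith [hθ.1]
  have := sin_neg_of_neg_of_neg_pi_lt hneg
    (by linarith [hθ.1, arcsin_le_pi_div_two (s * sin θ / R), pi_pos])
  nlinarith [mul_nonneg hr hsinθ]

theorem asymmetric_lens_area_general
    (x₁ x₂ : EuclideanSpace ℝ (Fin 2)) (r s θ R : ℝ)
    (hs : s = dist x₁ x₂) (hr : 0 < r) (hθ : θ ∈ Set.Icc 0 π)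
    (hR : R = Real.sqrt (r ^ 2 + s ^ 2 + 2 * r * s * Real.cos θ))
    (hcase : θ ≤ π / 2 ∨ s * Real.cos (π - θ) ≤ r) :
    volume (Metric.closedBall x₁ r ∩ Metric.closedBall x₂ R)
      = ENNReal.ofReal (R ^ 2 * (θ - Real.arcsin (s * Real.sin θ / R))
          + r ^ 2 * (π - θ) - r * s * Real.sin θ) := by
  have hs0 : 0 ≤ s := hs ▸ dist_nonneg
  have hR0 : 0 ≤ R := hR ▸ sqrt_nonneg _
  have hc : 0 ≤ r + s * cos θ := by
    rcases hcase with h | h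
    · linarith [mul_nonneg hs0 (cos_nonneg_of_mem_Icc ⟨by linarith [pi_pos, hθ.1], h⟩)]
    · rw [cos_pi_sub] at h
      linarith
  obtain ⟨hα, hRcos, hRsin⟩ := triangle_angle_sub_arcsin hr.le hs0 hθ hc hR
  have hdist : dist x₁ x₂ = dist (0 : EuclideanSpace ℝ (Fin 2)) !₂[s, 0] := by
    simp [← hs, EuclideanSpace.dist_eq, hs0]
  rw [volume_closedBall_inter_closedBall_congr hdist,
    EuclideanSpace.volume_closedBall_inter_closedBall_fin_two hr.le hR0,
    volume_lens (β := π - θ) hr.le hR0 hs0 hα ⟨by linarith [hθ.2], by linarith [hθ.1]⟩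
      (by rw [sin_pi_sub, hRsin]) (by rw [cos_pi_sub, hRcos]; ring),
    sin_pi_sub, cos_pi_sub]
  congr 1
  linear_combination (-(R * cos (θ - arcsin (s * sin θ / R)))) * hRsin - r * sin θ * hRcos

/-- **Eq. (46).** Asymmetric lens area with `s = dist x₁ x₂ > 0`, `θ ∈ [0, π]`, and
`R = √(r² + s² + 2rs cos θ)`: if `θ ≤ π/2` or `s cos(π − θ) ≤ r`, then the intersection of the
disks of radius `r` at `x₁` and `R` at `x₂` has area
`R²(θ − arcsin(s sin θ / R)) + r²(π − θ) − rs sin θ`. -/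
theorem asymmetric_lens_area
    (x₁ x₂ : EuclideanSpace ℝ (Fin 2)) (r s θ R : ℝ)
    (hs : s = dist x₁ x₂) (hspos : 0 < s) (hr : 0 < r) (hθ : θ ∈ Set.Icc 0 π)
    (hR : R = Real.sqrt (r ^ 2 + s ^ 2 + 2 * r * s * Real.cos θ))
    (hcase : θ ≤ π / 2 ∨ s * Real.cos (π - θ) ≤ r) :
    volume (Metric.closedBall x₁ r ∩ Metric.closedBall x₂ R)
      = ENNReal.ofReal (R ^ 2 * (θ - Real.arcsin (s * Real.sin θ / R))
          + r ^ 2 * (π - θ) - r * s * Real.sin θ) :=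
  asymmetric_lens_area_general x₁ x₂ r s θ R hs hr hθ hR hcase
end

section
/- Let t > 0 and fix r, ρ > 0. Let v be a nonnegative random variable whose law has CDF F_v and Lebesgue density f_v, and let θ be uniformly distributed on [0, 2π) and independent of v. Define the displaced distance D = √(r² + v²t² + 2·r·v·t·cos θ). Then P(D ≤ ρ) = F_v((ρ − r)/t) + (1/π)·∫_{|ρ−r|/t}^{(ρ+r)/t} f_v(x)·arccos((r² + x²t² − ρ²)/(2·r·x·t)) dx, where F_v((ρ − r)/t) is interpreted as 0 when ρ < r. -/
/-!
Given the speed `v = x > 0`, the law of cosines turns `D ≤ ρ` into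
`cos θ ≤ -(r² + x²t² - ρ²) / (2rxt)`, an arc of `[0, 2π)` of length
`2 arccos ((r² + x²t² - ρ²) / (2rxt))`; by independence, `P(D ≤ ρ)` is the integral of this
conditional probability against the density of `v`. It equals `1` when `xt ≤ ρ - r` (the circle of
radius `xt` around the initial point lies in the ball of radius `ρ`) and `0` when `|xt - r| ≥ ρ`
(the circle misses the ball), which leaves `F_v((ρ - r)/t)` plus the integral over
`(|ρ - r|/t, (ρ + r)/t]`.
-/

open MeasureTheory ProbabilityTheory Real Set

theorem Real.cos_le_iff_arccos_le {y c : ℝ} (hy₀ : 0 ≤ y) (hyπ : y ≤ π) (hc : -1 ≤ c) :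
    cos y ≤ c ↔ arccos c ≤ y := by
  refine ⟨fun h => arccos_cos hy₀ hyπ ▸ antitone_arccos h, fun h => ?_⟩
  rcases le_or_gt 1 c with hc₁ | hc₁
  · exact (cos_le_one y).trans hc₁
  · calc cos y ≤ cos (arccos c) := cos_le_cos_of_nonneg_of_le_pi (arccos_nonneg c) hyπ h
      _ = c := cos_arccos hc hc₁.le

theorem Real.setOf_cos_le_inter_Icc {c : ℝ} (hc : -1 ≤ c) :
    {y | cos y ≤ c} ∩ Icc 0 (2 * π) = Icc (arccos c) (2 * π - arccos c) := by
  have hπ := arccos_le_pi c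
  have h₀ := arccos_nonneg c
  ext y
  simp only [mem_inter_iff, mem_ofPred_eq, mem_Icc]
  rcases le_or_gt y π with hyπ | hyπ
  · constructor
    · rintro ⟨h, hy₀, -⟩
      exact ⟨(cos_le_iff_arccos_le hy₀ hyπ hc).1 h, by linarith⟩
    · rintro ⟨h, -⟩
      have hy₀ : 0 ≤ y := h₀.trans h
      exact ⟨(cos_le_iff_arccos_le hy₀ hyπ hc).2 h, hy₀, by linarith⟩
  · rw [← cos_two_pi_sub]
    constructor
    · rintro ⟨h, -, hy₂⟩
      have harc := (cos_le_iff_arccos_le (by linarith) (by linarith) hc).1 h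
      exact ⟨by linarith, by linarith⟩
    · rintro ⟨-, h⟩
      exact ⟨(cos_le_iff_arccos_le (by linarith) (by linarith) hc).2 (by linarith),
        by linarith, by linarith⟩

theorem Real.volume_setOf_cos_le_inter_Ico (c : ℝ) :
    volume ({y | cos y ≤ c} ∩ Ico 0 (2 * π)) = ENNReal.ofReal (2 * arccos (-c)) := by
  rcases lt_or_ge c (-1) with hc | hc
  · have hempty : {y | cos y ≤ c} ∩ Ico 0 (2 * π) = ∅ :=
      eq_empty_of_forall_notMem fun y hy => (neg_one_le_cos y).not_gt (hy.1.trans_lt hc)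
    rw [hempty, arccos_of_one_le (by linarith), measure_empty, mul_zero, ENNReal.ofReal_zero]
  · rw [measure_congr ((ae_eq_refl _).inter Ico_ae_eq_Icc), setOf_cos_le_inter_Icc hc,
      volume_Icc, arccos_neg]
    congr 1
    ring

noncomputable def uniformAngle : Measure ℝ :=
  (ENNReal.ofReal (2 * π))⁻¹ • volume.restrict (Ico 0 (2 * π))

theorem uniformAngle_setOf_sqrt_le {a b ρ : ℝ} (hb : 0 < b) (hρ : 0 ≤ ρ) :
    uniformAngle {y | √(a + b * cos y) ≤ ρ} = ENNReal.ofReal (π⁻¹ * arccos ((a - ρ ^ 2) / b)) := by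
  have hset : {y | √(a + b * cos y) ≤ ρ} = {y | cos y ≤ -((a - ρ ^ 2) / b)} := by
    ext y
    rw [mem_ofPred_eq, mem_ofPred_eq, sqrt_le_left hρ, le_neg, div_le_iff₀ hb]
    constructor <;> intro h <;> linarith
  have hmeas : MeasurableSet {y | cos y ≤ -((a - ρ ^ 2) / b)} :=
    measurableSet_le continuous_cos.measurable measurable_const
  rw [hset, uniformAngle, Measure.smul_apply, Measure.restrict_apply hmeas,
    volume_setOf_cos_le_inter_Ico, neg_neg, smul_eq_mul,
    ← ENNReal.ofReal_inv_of_pos (by positivity), ← ENNReal.ofReal_mul (by positivity)]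
  congr 1
  field_simp

theorem ProbabilityTheory.IndepFun.measure_preimage_eq_lintegral {Ω α β : Type*}
    [MeasurableSpace Ω] [MeasurableSpace α] [MeasurableSpace β] {μ : Measure Ω}
    [IsFiniteMeasure μ] {X : Ω → α} {Y : Ω → β} (h : IndepFun X Y μ) (hX : Measurable X)
    (hY : Measurable Y) {S : Set (α × β)} (hS : MeasurableSet S) :
    μ ((fun ω => (X ω, Y ω)) ⁻¹' S) = ∫⁻ x, μ.map Y (Prod.mk x ⁻¹' S) ∂μ.map X := by
  rw [← Measure.map_apply (hX.prodMk hY) hS,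
    (indepFun_iff_map_prod_eq_prod_map_map hX.aemeasurable hY.aemeasurable).1 h,
    Measure.prod_apply hS]

theorem ae_density_eq_zero_of_nonpos {Ω : Type*} [MeasurableSpace Ω] {μ : Measure Ω}
    {X : Ω → ℝ} (hX : Measurable X) (hX₀ : ∀ᵐ ω ∂μ, 0 ≤ X ω) {f : ℝ → ENNReal}
    (hf : Measurable f) (hlaw : μ.map X = volume.withDensity f) :
    ∀ᵐ x, x ≤ 0 → f x = 0 := by
  have hIio : ∫⁻ x in Iio 0, f x = 0 := by
    rw [← withDensity_apply _ measurableSet_Iio, ← hlaw, Measure.map_apply hX measurableSet_Iio]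
    exact measure_mono_null (fun ω hω => not_le.2 hω) (ae_iff.1 hX₀)
  rw [setLIntegral_congr Iio_ae_eq_Iic] at hIio
  exact (setLIntegral_eq_zero_iff measurableSet_Iic hf).1 hIio

theorem Real.arccos_div_eq_pi_of_add_sq_le {a b c : ℝ} (ha : 0 < a) (hb : 0 < b)
    (h : (a + b) ^ 2 ≤ c ^ 2) : arccos ((a ^ 2 + b ^ 2 - c ^ 2) / (2 * a * b)) = π :=
  arccos_of_le_neg_one <| by rw [div_le_iff₀ (by positivity)]; linarith

theorem Real.arccos_div_eq_zero_of_sq_le_sub_sq {a b c : ℝ} (ha : 0 < a) (hb : 0 < b)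
    (h : c ^ 2 ≤ (a - b) ^ 2) : arccos ((a ^ 2 + b ^ 2 - c ^ 2) / (2 * a * b)) = 0 :=
  arccos_of_one_le <| by rw [le_div_iff₀ (by positivity)]; linarith

/-- The conditional probability of `D ≤ ρ` given the speed `v = x`. -/
noncomputable def arcFraction (r t ρ x : ℝ) : ℝ :=
  π⁻¹ * arccos ((r ^ 2 + x ^ 2 * t ^ 2 - ρ ^ 2) / (2 * r * x * t))

section arcFraction

variable {r t ρ x : ℝ}

theorem arcFraction_eq_lawOfCosines (r t ρ x : ℝ) :
    arcFraction r t ρ x = π⁻¹ * arccos ((r ^ 2 + (x * t) ^ 2 - ρ ^ 2) / (2 * r * (x * t))) := by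
  rw [arcFraction]
  ring_nf

theorem arcFraction_eq_one (hr : 0 < r) (ht : 0 < t) (hx : 0 < x) (h : x * t ≤ ρ - r) :
    arcFraction r t ρ x = 1 := by
  have hxt : 0 < x * t := by positivity
  rw [arcFraction_eq_lawOfCosines, arccos_div_eq_pi_of_add_sq_le hr hxt (by nlinarith),
    inv_mul_cancel₀ pi_ne_zero]

theorem arcFraction_eq_zero (hr : 0 < r) (ht : 0 < t) (hρ : 0 ≤ ρ) (hx : 0 < x)
    (h : ρ ≤ |r - x * t|) : arcFraction r t ρ x = 0 := by
  have hxt : 0 < x * t := by positivity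
  rw [arcFraction_eq_lawOfCosines, arccos_div_eq_zero_of_sq_le_sub_sq hr hxt
    (sq_abs (r - x * t) ▸ pow_le_pow_left₀ hρ h 2), mul_zero]

theorem ofReal_arcFraction_eq_indicator_add_indicator (hr : 0 < r) (ht : 0 < t) (hρ : 0 ≤ ρ)
    (hx : 0 < x) :
    ENNReal.ofReal (arcFraction r t ρ x) = (Iic ((ρ - r) / t)).indicator 1 x
      + (Ioc (|ρ - r| / t) ((ρ + r) / t)).indicator (ENNReal.ofReal ∘ arcFraction r t ρ) x := by
  by_cases hfull : x ∈ Iic ((ρ - r) / t)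
  · have hA : (ρ - r) / t ≤ |ρ - r| / t := div_le_div_of_nonneg_right (le_abs_self _) ht.le
    rw [arcFraction_eq_one hr ht hx ((le_div_iff₀ ht).1 hfull), indicator_of_mem hfull,
      indicator_of_notMem fun h => h.1.not_ge (le_trans hfull hA)]
    simp
  by_cases hmid : x ∈ Ioc (|ρ - r| / t) ((ρ + r) / t)
  · simp [indicator_of_mem hmid, indicator_of_notMem hfull]
  rw [indicator_of_notMem hfull, indicator_of_notMem hmid, add_zero,
    arcFraction_eq_zero hr ht hρ hx, ENNReal.ofReal_zero]
  rw [mem_Ioc, not_and_or, not_lt, not_le, le_div_iff₀ ht, div_lt_iff₀ ht] at hmid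
  rw [mem_Iic, not_le, div_lt_iff₀ ht] at hfull
  rcases hmid with hnear | hfar
  · have hxt : x * t ≤ r - ρ := by rcases abs_cases (ρ - r) with ⟨h, -⟩ | ⟨h, -⟩ <;> linarith
    rw [abs_of_nonneg (by linarith)]
    linarith
  · rw [abs_of_neg (by linarith : r - x * t < 0)]
    linarith

end arcFraction

theorem uniformAngle_displaced_le {r t ρ x : ℝ} (hr : 0 < r) (ht : 0 < t) (hρ : 0 ≤ ρ)
    (hx : 0 < x) :
    uniformAngle {y | √(r ^ 2 + x ^ 2 * t ^ 2 + 2 * r * x * t * cos y) ≤ ρ}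
      = ENNReal.ofReal (arcFraction r t ρ x) :=
  uniformAngle_setOf_sqrt_le (by positivity) hρ

section DisplacedDistance

variable {Ω : Type*} [MeasurableSpace Ω] {μ : Measure Ω} [IsFiniteMeasure μ] {t r ρ : ℝ}
  {v θ : Ω → ℝ} {fv : ℝ → ℝ}

theorem measure_displaced_le_eq_add_lintegral (ht : 0 < t) (hr : 0 < r) (hρ : 0 ≤ ρ)
    (hv : Measurable v) (hθ : Measurable θ) (hv₀ : ∀ᵐ ω ∂μ, 0 ≤ v ω) (hfv : Measurable fv)
    (hfv₀ : ∀ x, 0 ≤ fv x) (hvlaw : μ.map v = volume.withDensity fun x => ENNReal.ofReal (fv x))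
    (hθlaw : μ.map θ = uniformAngle) (hindep : IndepFun v θ μ) :
    μ {ω | √(r ^ 2 + v ω ^ 2 * t ^ 2 + 2 * r * v ω * t * cos (θ ω)) ≤ ρ}
      = μ {ω | v ω ≤ (ρ - r) / t}
        + ∫⁻ x in Ioc (|ρ - r| / t) ((ρ + r) / t), ENNReal.ofReal (fv x * arcFraction r t ρ x) := by
  set S := {p : ℝ × ℝ | √(r ^ 2 + p.1 ^ 2 * t ^ 2 + 2 * r * p.1 * t * cos p.2) ≤ ρ}
  have hS : MeasurableSet S := measurableSet_le (by fun_prop) measurable_const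
  have hf : Measurable fun x => ENNReal.ofReal (fv x) := hfv.ennreal_ofReal
  have hsection : ∀ᵐ x, ENNReal.ofReal (fv x) * μ.map θ (Prod.mk x ⁻¹' S)
      = (Iic ((ρ - r) / t)).indicator (fun x => ENNReal.ofReal (fv x)) x
        + (Ioc (|ρ - r| / t) ((ρ + r) / t)).indicator
          (fun x => ENNReal.ofReal (fv x * arcFraction r t ρ x)) x := by
    filter_upwards [ae_density_eq_zero_of_nonpos hv hv₀ hf hvlaw] with x hx
    rcases le_or_gt x 0 with hx₀ | hx₀
    · have hfx : fv x = 0 := le_antisymm (ENNReal.ofReal_eq_zero.1 (hx hx₀)) (hfv₀ x)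
      simp [indicator_apply, hfx]
    · have hangle : uniformAngle (Prod.mk x ⁻¹' S) = _ := uniformAngle_displaced_le hr ht hρ hx₀
      rw [hθlaw, hangle, ofReal_arcFraction_eq_indicator_add_indicator hr ht hρ hx₀, mul_add]
      simp only [indicator_apply]
      split_ifs <;> simp [ENNReal.ofReal_mul (hfv₀ x)]
  change μ ((fun ω => (v ω, θ ω)) ⁻¹' S) = _
  rw [hindep.measure_preimage_eq_lintegral hv hθ hS, hvlaw,
    lintegral_withDensity_eq_lintegral_mul _ hf (measurable_measure_prodMk_left hS)]
  refine (lintegral_congr_ae hsection).trans ?_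
  rw [lintegral_add_left (hf.indicator measurableSet_Iic), lintegral_indicator measurableSet_Iic,
    lintegral_indicator measurableSet_Ioc, ← withDensity_apply _ measurableSet_Iic, ← hvlaw,
    Measure.map_apply hv measurableSet_Iic]
  rfl

end DisplacedDistance

/-- **Lemma 1 kernel.** For a point at initial distance `r` that moves for time `t`
at a random nonnegative speed `v` (with CDF `Fv` and density `fv`) in an independent uniformly
random direction `θ`, the probability that the displaced distance
`D = √(r² + v²t² + 2rvt cos θ)` is at most `ρ` equals
`Fv((ρ − r)/t) + (1/π)·∫_{|ρ−r|/t}^{(ρ+r)/t} fv(x)·arccos((r² + x²t² − ρ²)/(2rxt)) dx`. -/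
theorem displaced_distance_cdf
    {Ω : Type*} [MeasurableSpace Ω] (μ : Measure Ω) [IsProbabilityMeasure μ]
    (t r ρ : ℝ) (ht : 0 < t) (hr : 0 < r) (hρ : 0 < ρ)
    (v θ : Ω → ℝ) (hvmeas : Measurable v) (hθmeas : Measurable θ)
    (hvnonneg : ∀ᵐ ω ∂μ, 0 ≤ v ω)
    (fv : ℝ → ℝ) (hfmeas : Measurable fv) (hfnonneg : ∀ x, 0 ≤ fv x)
    (hvlaw : Measure.map v μ = volume.withDensity fun x => ENNReal.ofReal (fv x))
    (Fv : ℝ → ℝ) (hFv : ∀ x, Fv x = (μ {ω | v ω ≤ x}).toReal)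
    (hθunif : Measure.map θ μ
      = (ENNReal.ofReal (2 * π))⁻¹ • volume.restrict (Set.Ico 0 (2 * π)))
    (hindep : IndepFun v θ μ) :
    (μ {ω | Real.sqrt (r ^ 2 + (v ω) ^ 2 * t ^ 2
        + 2 * r * v ω * t * Real.cos (θ ω)) ≤ ρ}).toReal
      = Fv ((ρ - r) / t)
        + π⁻¹ * ∫ x in (|ρ - r| / t)..((ρ + r) / t),
            fv x * Real.arccos ((r ^ 2 + x ^ 2 * t ^ 2 - ρ ^ 2) / (2 * r * x * t)) := by
  have hprob := measure_displaced_le_eq_add_lintegral ht hr hρ.le hvmeas hθmeas hvnonneg hfmeas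
    hfnonneg hvlaw hθunif hindep
  have hfinite := ne_top_of_le_ne_top (measure_ne_top μ _) (hprob ▸ le_add_self)
  have hnonneg : ∀ x, 0 ≤ fv x * arcFraction r t ρ x := fun x =>
    mul_nonneg (hfnonneg x) (mul_nonneg (inv_nonneg.2 pi_pos.le) (arccos_nonneg _))
  have hmeas : Measurable fun x => fv x * arcFraction r t ρ x := by
    unfold arcFraction
    fun_prop
  rw [hprob, ENNReal.toReal_add (measure_ne_top _ _) hfinite, ← hFv,
    ← integral_eq_lintegral_of_nonneg_ae (ae_of_all _ hnonneg) hmeas.aestronglyMeasurable,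
    intervalIntegral.integral_of_le (by gcongr; exact abs_le.2 ⟨by linarith, by linarith⟩),
    ← integral_const_mul]
  exact congrArg _ (integral_congr_ae (ae_of_all _ fun x => by unfold arcFraction; ring))
end
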